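/- Let G be a cofinitary group, r ∈ 2^ω, T ∈ I_i(G)^+, t ∈ T, and (s,E) a condition of Z†_G(r). Then there exist a condition (s',E) of Z†_G(r) with (s',E) ≤ (s,E), an element t' ∈ T with t ⊆ t', and k ∈ dom(t') \ dom(t) such that t'(k) = s'(k). -/

import Mathlib

noncomputable section

/-- Permutations of the natural numbers (elements of `S_∞`). -/
abbrev Perm' := Equiv.Perm ℕ

/-- A letter of a word over `G ∪ {x, x⁻¹}`: either a group element (of `S_∞`),
or `Sum.inr true` standing for `x`, or `Sum.inr false` standing for `x⁻¹`. -/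
abbrev Letter := Perm' ⊕ Bool

/-- A word is a list of letters, written left to right
(the leftmost letter is applied last). -/
abbrev Word := List Letter

/-- A subgroup of `S_∞` is cofinitary if every non-identity element
has only finitely many fixed points. -/
def Cofinitary (G : Subgroup Perm') : Prop :=
  ∀ g ∈ G, g ≠ 1 → {n : ℕ | g n = n}.Finite

/-- A set of pairs is a partial injection (functional and injective). -/
def PartInj (s : Set (ℕ × ℕ)) : Prop :=
  (∀ ⦃a b c⦄, (a, b) ∈ s → (a, c) ∈ s → b = c) ∧
  (∀ ⦃a b c⦄, (a, c) ∈ s → (b, c) ∈ s → a = b)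

/-- Domain of a partial injection given as a set of pairs. -/
def pdom (s : Set (ℕ × ℕ)) : Set ℕ := Prod.fst '' s

/-- Range of a partial injection given as a set of pairs. -/
def pran (s : Set (ℕ × ℕ)) : Set ℕ := Prod.snd '' s

/-- The relation given by substituting the partial injection `s` for `x`
(and `s⁻¹` for `x⁻¹`) in a single letter. -/
def letterRel (s : Set (ℕ × ℕ)) : Letter → ℕ → ℕ → Prop
  | Sum.inl g => fun a b => g a = b
  | Sum.inr true => fun a b => (a, b) ∈ s
  | Sum.inr false => fun a b => (b, a) ∈ s

/-- The relation `w[s]`: evaluation of a word at the partial injection `s`,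
composing the letter relations (rightmost letter applied first). -/
def wordRel (s : Set (ℕ × ℕ)) : Word → ℕ → ℕ → Prop
  | [] => fun a b => a = b
  | l :: w => fun a b => ∃ c, wordRel s w a c ∧ letterRel s l c b

/-- `fix(w[s])`, the set of fixed points of the partial injection `w[s]`. -/
def wordFix (s : Set (ℕ × ℕ)) (w : Word) : Set ℕ := {n | wordRel s w n n}

/-- The word `x^k` for an integer `k` (for `k < 0`, `|k|` copies of `x⁻¹`). -/
def xpow (k : ℤ) : Word :=
  if 0 ≤ k then List.replicate k.toNat (Sum.inr true : Letter)
  else List.replicate (-k).toNat (Sum.inr false : Letter)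

/-- The block `g x^k` as a word. -/
def blockWord (p : Perm' × ℤ) : Word := Sum.inl p.1 :: xpow p.2

/-- `w` is a nice word (member of `W*_G`): `w = x^{k₀}` with `k₀ > 0`, or
`w = g_l x^{k_l} ⋯ g₁ x^{k₁} g₀ x^{k₀}` with `k₀ > 0`, all `k_i ≠ 0` and all
`g_i ∈ G \ {id}`. -/
def IsNice (G : Subgroup Perm') (w : Word) : Prop :=
  (∃ k : ℕ, 0 < k ∧ w = xpow (k : ℤ)) ∨
  (∃ bs : List (Perm' × ℤ), bs ≠ [] ∧
    (∀ p ∈ bs, p.1 ∈ G ∧ p.1 ≠ 1 ∧ p.2 ≠ 0) ∧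
    (∃ p, bs.getLast? = some p ∧ 0 < p.2) ∧
    w = (bs.map blockWord).flatten)

/-- The number of occurrences of `x` or `x⁻¹` in a word. -/
def xOccurrences (w : Word) : ℕ := w.countP (fun l => l.isRight)

/-- `w ∈ W¹_G`: a nice word with exactly one occurrence of `x` or `x⁻¹`. -/
def IsNiceOne (G : Subgroup Perm') (w : Word) : Prop :=
  IsNice G w ∧ xOccurrences w = 1

/-- `(s, E)` is a condition of Zhang's forcing `Z_G`: `s` is a finite partial
injection and `E` a finite set of nice words. -/
def ZCond (G : Subgroup Perm') (s : Set (ℕ × ℕ)) (E : Set Word) : Prop :=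
  s.Finite ∧ PartInj s ∧ E.Finite ∧ ∀ w ∈ E, IsNice G w

/-- `(t, F) ≤ (s, E)` in Zhang's forcing: `s ⊆ t`, `E ⊆ F`, and
`fix(w[t]) = fix(w[s])` for every `w ∈ E`. -/
def ZLe (t : Set (ℕ × ℕ)) (F : Set Word) (s : Set (ℕ × ℕ)) (E : Set Word) : Prop :=
  s ⊆ t ∧ E ⊆ F ∧ ∀ w ∈ E, wordFix t w = wordFix s w

/-- An injective tree: a nonempty set of finite sequences closed under initial
segments, all of whose elements are injective sequences. -/
def IsInjTree (T : Set (List ℕ)) : Prop :=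
  T.Nonempty ∧ (∀ t ∈ T, ∀ s : List ℕ, s <+: t → s ∈ T) ∧ ∀ t ∈ T, t.Nodup

/-- `T ∈ I_i(P)⁺`: an injective tree such that for every `s ∈ T` and every
finite `P₀ ⊆ P` there are `t ∈ T` extending `s` and `k ∈ dom(t) \ dom(s)` with
`t(k) ≠ f(k)` for all `f ∈ P₀`. -/
def TreePos (P : Set Perm') (T : Set (List ℕ)) : Prop :=
  IsInjTree T ∧
  ∀ s ∈ T, ∀ P₀ ⊆ P, P₀.Finite →
    ∃ t ∈ T, s <+: t ∧ ∃ k, s.length ≤ k ∧ k < t.length ∧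
      ∀ f ∈ P₀, t.getD k 0 ≠ f k

/-- A set `O` is closed under a relation `R` and its inverse. -/
def RelClosed (R : ℕ → ℕ → Prop) (O : Set ℕ) : Prop :=
  ∀ a b, R a b → (a ∈ O ↔ b ∈ O)

/-- The orbit of `n` under the (partial injective) relation `R`: the smallest
set containing `n` closed under applications of `R` and `R⁻¹`. -/
def relOrbit (R : ℕ → ℕ → Prop) (n : ℕ) : Set ℕ :=
  ⋂₀ {O : Set ℕ | n ∈ O ∧ RelClosed R O}

/-- The set of all orbits of the relation `R`. -/
def relOrbits (R : ℕ → ℕ → Prop) : Set (Set ℕ) := {O | ∃ n, O = relOrbit R n}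

/-- Domain of a relation. -/
def relDom (R : ℕ → ℕ → Prop) : Set ℕ := {a | ∃ b, R a b}

/-- Range of a relation. -/
def relRan (R : ℕ → ℕ → Prop) : Set ℕ := {b | ∃ a, R a b}

/-- The set of closed orbits of `R`: those orbits contained in `dom ∩ ran`. -/
def relClosedOrbits (R : ℕ → ℕ → Prop) : Set (Set ℕ) :=
  {O ∈ relOrbits R | O ⊆ relDom R ∩ relRan R}

/-- The relation of a partial injection given as a set of pairs. -/
def sRel (s : Set (ℕ × ℕ)) : ℕ → ℕ → Prop := fun a b => (a, b) ∈ s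

/-- The relation (graph) of a permutation of `ℕ`. -/
def permRel (f : Perm') : ℕ → ℕ → Prop := fun a b => f a = b

/-- A partial injection `s` is nice: every closed orbit has its minimum below
the minimum of the complement of the union of all closed orbits. -/
def NiceInj (s : Set (ℕ × ℕ)) : Prop :=
  ∀ O ∈ relClosedOrbits (sRel s),
    sInf O < sInf {n : ℕ | n ∉ ⋃₀ relClosedOrbits (sRel s)}

/-- The position of a closed orbit `O` of `s` in the well-order of closed
orbits by their minima. -/
def orbitIndex (s : Set (ℕ × ℕ)) (O : Set ℕ) : ℕ :=
  {P ∈ relClosedOrbits (sRel s) | sInf P < sInf O}.ncard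

/-- `s` codes `r`, i.e. `o_s ⊆ r`: the `n`-th closed orbit (in the well-order
by minima) has cardinality congruent to `r(n)` mod 2. -/
def CodesReal (s : Set (ℕ × ℕ)) (r : ℕ → Fin 2) : Prop :=
  ∀ O ∈ relClosedOrbits (sRel s), O.ncard % 2 = (r (orbitIndex s O) : ℕ)

/-- `(s, E)` is a condition of `Z_G(r)`. -/
def ZrCond (G : Subgroup Perm') (r : ℕ → Fin 2)
    (s : Set (ℕ × ℕ)) (E : Set Word) : Prop :=
  ZCond G s E ∧ NiceInj s ∧ CodesReal s r

/-- The `n`-th prime. -/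
def pPrime (n : ℕ) : ℕ := Nat.nth Nat.Prime n

/-- The orbit-coding function `o†`: `o†(n)` is the number of closed orbits of
`R` of cardinality `p_n`, modulo 2. -/
def odag (R : ℕ → ℕ → Prop) (n : ℕ) : ℕ :=
  {O ∈ relClosedOrbits R | O.ncard = pPrime n}.ncard % 2

/-- `v^k`: the word `v` concatenated `k` times. -/
def wpow (v : Word) (k : ℕ) : Word := (List.replicate k v).flatten

/-- `w ∈ W†_G`: a nice word that is indecomposable, i.e. not of the form `v^k`
for a nice word `v` and `k > 1`. -/
def Indecomposable (G : Subgroup Perm') (w : Word) : Prop :=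
  IsNice G w ∧ ¬∃ v : Word, IsNice G v ∧ ∃ k : ℕ, 1 < k ∧ w = wpow v k

/-- The inverse of a letter. -/
def letterInv : Letter → Letter
  | Sum.inl g => Sum.inl g⁻¹
  | Sum.inr b => Sum.inr (!b)

/-- The inverse of a word. -/
def wordInv (w : Word) : Word := (w.map letterInv).reverse

/-- `E` is closed under cyclic permutations and inverses thereof within `W*_G`. -/
def CyclClosed (G : Subgroup Perm') (E : Set Word) : Prop :=
  ∀ w ∈ E, ∀ w₀ w₁ : Word, w = w₀ ++ w₁ →
    (IsNice G (w₁ ++ w₀) → w₁ ++ w₀ ∈ E) ∧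
    (IsNice G (wordInv (w₁ ++ w₀)) → wordInv (w₁ ++ w₀) ∈ E)

/-- `(s, E)` is a condition of `Z†_G(r)`: a Zhang condition such that `E` is
closed under cyclic permutations and inverses thereof in `W*_G`, and whenever
`w = v^k ∈ E` with `v ∈ W†_G` then `v^l ∈ E` for all `0 < l ≤ k` and `o†_{v[s]}`
codes `r` up to `n` for every `n` with `p_n ≤ k`. -/
def ZdagCond (G : Subgroup Perm') (r : ℕ → Fin 2)
    (s : Set (ℕ × ℕ)) (E : Set Word) : Prop :=
  ZCond G s E ∧ CyclClosed G E ∧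
  ∀ w ∈ E, ∀ v : Word, ∀ k : ℕ, Indecomposable G v → w = wpow v k →
    (∀ l : ℕ, 0 < l → l ≤ k → wpow v l ∈ E) ∧
    (∀ n : ℕ, pPrime n ≤ k → ∀ i ≤ n, odag (wordRel s v) i = (r i : ℕ))

/-- Substituting the permutation `f` for `x` in a letter. -/
def letterPerm (f : Perm') : Letter → Perm'
  | Sum.inl g => g
  | Sum.inr true => f
  | Sum.inr false => f⁻¹

/-- `w[f]`: evaluation of a word at the permutation `f`. -/
def wordPerm (f : Perm') (w : Word) : Perm' := (w.map (letterPerm f)).prod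

/-- Two functions are eventually different. -/
def EvDiff (f g : ℕ → ℕ) : Prop := {k : ℕ | f k = g k}.Finite

/-- A set of permutations is an eventually different family. -/
def EDFamily (P : Set Perm') : Prop :=
  ∀ f ∈ P, ∀ g ∈ P, f ≠ g → EvDiff f g

/-!
Extend `s` by a single pair `(k, y)`, where `k` is a new position of some `t' ⊇ t` in `T` and
`y = t'(k)`. Take `k` outside `dom s ∪ ran s` and its images under the group letters of `E`.
Applying `T ∈ I_i(G)⁺` repeatedly, with the identity and the inverses of these letters, gives
arbitrarily many admissible positions; `T` is injective, so their values are distinct and one of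
them avoids a finite set of bad values (finite because `G` is cofinitary).

Every `w ∈ E` is reduced and applies `x` first, `w = w₁ x`. For such a pair a path of
`w[s ∪ {(k, y)}]` can use the new pair only in its first step, so `w[s ∪ {(k, y)}]` is `w[s]` plus
at most the edge `k ↦ w₁[s](y)`, which is neither a fixed point nor part of a closed orbit. Hence
the fixed points and closed orbits of `w[s]`, and with them the values of `o†`, do not change.
-/

lemma wordRel_cons (s : Set (ℕ × ℕ)) (l : Letter) (w : Word) (a b : ℕ) :
    wordRel s (l :: w) a b ↔ ∃ c, wordRel s w a c ∧ letterRel s l c b := Iff.rfl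

lemma wordRel_append (s : Set (ℕ × ℕ)) (u v : Word) (a b : ℕ) :
    wordRel s (u ++ v) a b ↔ ∃ c, wordRel s v a c ∧ wordRel s u c b := by
  induction u generalizing b with
  | nil => exact ⟨fun h => ⟨b, h, rfl⟩, fun ⟨_, h, rfl⟩ => h⟩
  | cons l u ih =>
    simp only [List.cons_append, wordRel_cons, ih]
    constructor
    · rintro ⟨d, ⟨c, hc, hcd⟩, hl⟩
      exact ⟨c, hc, d, hcd, hl⟩
    · rintro ⟨c, hc, d, hd, hl⟩
      exact ⟨d, ⟨c, hc, hd⟩, hl⟩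

lemma letterRel_mono {s t : Set (ℕ × ℕ)} (h : s ⊆ t) {l : Letter} {a b : ℕ}
    (hl : letterRel s l a b) : letterRel t l a b := by
  rcases l with g | _ | _
  exacts [hl, h hl, h hl]

lemma wordRel_mono {s t : Set (ℕ × ℕ)} (h : s ⊆ t) {w : Word} {a b : ℕ}
    (hw : wordRel s w a b) : wordRel t w a b := by
  induction w generalizing b with
  | nil => exact hw
  | cons l w ih =>
    obtain ⟨c, hc, hl⟩ := hw
    exact ⟨c, ih hc, letterRel_mono h hl⟩

section PartInj

variable {s : Set (ℕ × ℕ)} (hs : PartInj s)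
include hs

lemma letterRel_rightUnique (l : Letter) : Relator.RightUnique (letterRel s l) := by
  intro a b b' h₁ h₂
  rcases l with g | _ | _
  exacts [h₁.symm.trans h₂, hs.2 h₁ h₂, hs.1 h₁ h₂]

lemma letterRel_leftUnique (l : Letter) : Relator.LeftUnique (letterRel s l) := by
  intro a a' b h₁ h₂
  rcases l with g | _ | _
  exacts [g.injective (h₁.trans h₂.symm), hs.1 h₁ h₂, hs.2 h₁ h₂]

lemma wordRel_rightUnique (w : Word) : Relator.RightUnique (wordRel s w) := by
  induction w with
  | nil => exact fun a b b' h₁ h₂ => h₁.symm.trans h₂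
  | cons l w ih =>
    rintro a b b' ⟨c, hc, hl⟩ ⟨c', hc', hl'⟩
    obtain rfl := ih hc hc'
    exact letterRel_rightUnique hs l hl hl'

lemma wordRel_leftUnique (w : Word) : Relator.LeftUnique (wordRel s w) := by
  induction w with
  | nil => exact fun a a' b h₁ h₂ => h₁.trans h₂.symm
  | cons l w ih =>
    rintro a a' b ⟨c, hc, hl⟩ ⟨c', hc', hl'⟩
    obtain rfl := letterRel_leftUnique hs l hl hl'
    exact ih hc hc'

lemma wordRel_preimage_finite (u : Word) {F : Set ℕ} (hF : F.Finite) :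
    {a | ∃ c, wordRel s u a c ∧ c ∈ F}.Finite := by
  refine (hF.biUnion fun c _ => Set.Subsingleton.finite (s := {a | wordRel s u a c})
    fun a ha a' ha' => wordRel_leftUnique hs u ha ha').subset ?_
  rintro a ⟨c, hac, hc⟩
  exact Set.mem_biUnion hc hac

lemma PartInj.insert {k y : ℕ} (hk : k ∉ pdom s) (hy : y ∉ pran s) :
    PartInj (insert (k, y) s) := by
  constructor
  · rintro a b c (⟨rfl, rfl⟩ | h₁) (h₂ | h₂)
    · exact (Prod.mk.inj h₂).2.symm
    · exact absurd ⟨_, h₂, rfl⟩ hk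
    · obtain ⟨rfl, rfl⟩ := Prod.mk.inj h₂
      exact absurd ⟨_, h₁, rfl⟩ hk
    · exact hs.1 h₁ h₂
  · rintro a b c (⟨rfl, rfl⟩ | h₁) (h₂ | h₂)
    · exact (Prod.mk.inj h₂).1.symm
    · exact absurd ⟨_, h₂, rfl⟩ hy
    · obtain ⟨rfl, rfl⟩ := Prod.mk.inj h₂
      exact absurd ⟨_, h₁, rfl⟩ hy
    · exact hs.2 h₁ h₂

end PartInj

def pfield (s : Set (ℕ × ℕ)) : Set ℕ := pdom s ∪ pran s

lemma pfield_finite {s : Set (ℕ × ℕ)} (hs : s.Finite) : (pfield s).Finite :=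
  (hs.image _).union (hs.image _)

lemma letterRel_inr_mem_pfield {s : Set (ℕ × ℕ)} {b : Bool} {c d : ℕ}
    (h : letterRel s (Sum.inr b) c d) : c ∈ pfield s ∧ d ∈ pfield s := by
  cases b
  · exact ⟨Or.inr ⟨(d, c), h, rfl⟩, Or.inl ⟨(d, c), h, rfl⟩⟩
  · exact ⟨Or.inl ⟨(c, d), h, rfl⟩, Or.inr ⟨(c, d), h, rfl⟩⟩

lemma relRan_wordRel_finite {s : Set (ℕ × ℕ)} (hs : s.Finite) {u : Word}
    (hu : ∃ b : Bool, Sum.inr b ∈ u) : (relRan (wordRel s u)).Finite := by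
  induction u with
  | nil => simp at hu
  | cons l u ih =>
    rcases l with g | b
    · have hu' : ∃ b : Bool, Sum.inr b ∈ u := by simpa using hu
      refine ((ih hu').image g).subset ?_
      rintro d ⟨a, c, hc, hl⟩
      exact ⟨c, ⟨a, hc⟩, hl⟩
    · refine (pfield_finite hs).subset ?_
      rintro d ⟨a, c, -, hl⟩
      exact (letterRel_inr_mem_pfield hl).2

section Orbits

variable {R R' : ℕ → ℕ → Prop}

lemma mem_relOrbit_self (R : ℕ → ℕ → Prop) (n : ℕ) : n ∈ relOrbit R n :=
  Set.mem_sInter.2 fun _ hO => hO.1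

lemma relClosed_relOrbit (R : ℕ → ℕ → Prop) (n : ℕ) : RelClosed R (relOrbit R n) :=
  fun a b hab => ⟨fun h O hO => (hO.2 a b hab).1 (h O hO), fun h O hO => (hO.2 a b hab).2 (h O hO)⟩

lemma relOrbit_subset {n : ℕ} {O : Set ℕ} (hn : n ∈ O) (hO : RelClosed R O) :
    relOrbit R n ⊆ O :=
  Set.sInter_subset_of_mem ⟨hn, hO⟩

lemma relOrbit_mono (h : ∀ a b, R a b → R' a b) (n : ℕ) : relOrbit R n ⊆ relOrbit R' n :=
  Set.sInter_subset_sInter fun _ hO => ⟨hO.1, fun a b hab => hO.2 a b (h a b hab)⟩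

lemma relOrbit_eq_of_rel {a b : ℕ} (hab : R a b) : relOrbit R a = relOrbit R b :=
  subset_antisymm
    (relOrbit_subset ((relClosed_relOrbit R b a b hab).2 (mem_relOrbit_self R b))
      (relClosed_relOrbit R b))
    (relOrbit_subset ((relClosed_relOrbit R a a b hab).1 (mem_relOrbit_self R a))
      (relClosed_relOrbit R a))

lemma relOrbit_eq_of_mem {n m : ℕ} (hm : m ∈ relOrbit R n) : relOrbit R n = relOrbit R m := by
  have hclosed : RelClosed R {p | n ∈ relOrbit R p} := fun a b hab =>
    iff_of_eq (congrArg (n ∈ ·) (relOrbit_eq_of_rel hab))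
  have hn : m ∈ {p | n ∈ relOrbit R p} :=
    relOrbit_subset (O := {p | n ∈ relOrbit R p}) (mem_relOrbit_self R n) hclosed hm
  exact subset_antisymm (relOrbit_subset hn (relClosed_relOrbit R m))
    (relOrbit_subset hm (relClosed_relOrbit R n))

variable {k c : ℕ} (hR' : ∀ a b, R' a b ↔ R a b ∨ (a = k ∧ b = c))
include hR'

lemma relOrbit_add_edge {n : ℕ} (hk : k ∉ relOrbit R n) (hc : c ∉ relOrbit R n) :
    relOrbit R' n = relOrbit R n := by
  refine subset_antisymm (relOrbit_subset (mem_relOrbit_self R n) fun a b hab => ?_)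
    (relOrbit_mono (fun a b h => (hR' a b).2 (Or.inl h)) n)
  rcases (hR' a b).1 hab with h | ⟨rfl, rfl⟩
  · exact relClosed_relOrbit R n a b h
  · exact iff_of_false hk hc

/-- The orbit of `k` under `R'` is not closed at `k`; every other orbit of `R'` avoids `k` and `c`,
so it is an orbit of `R`. -/
lemma relClosedOrbits_add_edge (hk_dom : ∀ b, ¬ R k b) (hk_ran : ∀ a, ¬ R a k)
    (hc_ran : ∀ a, ¬ R a c) (hck : c ≠ k) : relClosedOrbits R' = relClosedOrbits R := by
  have hRR' : ∀ a b, R a b → R' a b := fun a b h => (hR' a b).2 (Or.inl h)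
  ext O
  constructor
  · rintro ⟨⟨n, rfl⟩, hcl⟩
    have hk : k ∉ relOrbit R' n := fun h => by
      obtain ⟨a, ha⟩ := (hcl h).2
      rcases (hR' a k).1 ha with h | ⟨-, h⟩
      exacts [hk_ran a h, hck h.symm]
    have hc : c ∉ relOrbit R' n := fun h => hk <| by
      rw [relOrbit_eq_of_mem h]
      exact (relClosed_relOrbit R' c k c ((hR' k c).2 (Or.inr ⟨rfl, rfl⟩))).2
        (mem_relOrbit_self R' c)
    have heq := relOrbit_add_edge hR' (fun h => hk (relOrbit_mono hRR' n h))
      (fun h => hc (relOrbit_mono hRR' n h))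
    rw [heq] at hcl hk hc ⊢
    refine ⟨⟨n, rfl⟩, fun m hm => ⟨?_, ?_⟩⟩
    · obtain ⟨b, hb⟩ := (hcl hm).1
      rcases (hR' m b).1 hb with h | ⟨rfl, -⟩
      exacts [⟨b, h⟩, absurd hm hk]
    · obtain ⟨a, ha⟩ := (hcl hm).2
      rcases (hR' a m).1 ha with h | ⟨-, rfl⟩
      exacts [⟨a, h⟩, absurd hm hc]
  · rintro ⟨⟨n, rfl⟩, hcl⟩
    have heq := relOrbit_add_edge hR'
      (fun h => let ⟨⟨b, hb⟩, _⟩ := hcl h; hk_dom b hb)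
      (fun h => let ⟨_, ⟨a, ha⟩⟩ := hcl h; hc_ran a ha)
    refine ⟨⟨n, heq.symm⟩, fun m hm => ?_⟩
    obtain ⟨⟨b, hb⟩, ⟨a, ha⟩⟩ := hcl hm
    exact ⟨⟨b, hRR' _ _ hb⟩, ⟨a, hRR' _ _ ha⟩⟩

end Orbits

def ReducedAdj : Letter → Letter → Prop
  | Sum.inl _, Sum.inl _ => False
  | Sum.inr b, Sum.inr b' => b = b'
  | _, _ => True

lemma xpow_eq_replicate {z : ℤ} (hz : z ≠ 0) :
    ∃ n b, 0 < n ∧ xpow z = List.replicate n (Sum.inr b : Letter) := by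
  unfold xpow
  split_ifs with h
  · exact ⟨z.toNat, true, by omega, rfl⟩
  · exact ⟨(-z).toNat, false, by omega, rfl⟩

lemma inl_not_mem_xpow (g : Perm') (z : ℤ) : Sum.inl g ∉ xpow z := by
  unfold xpow
  split_ifs <;> simp [List.mem_replicate]

lemma isChain_blockWord {p : Perm' × ℤ} (hp : p.2 ≠ 0) : (blockWord p).IsChain ReducedAdj := by
  obtain ⟨n, b, -, hx⟩ := xpow_eq_replicate hp
  rw [blockWord, hx, List.isChain_cons]
  refine ⟨fun l hl => ?_, List.isChain_replicate_of_rel n rfl⟩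
  obtain ⟨-, rfl⟩ := List.mem_replicate.1 (List.mem_of_mem_head? hl)
  trivial

lemma getLast?_blockWord {p : Perm' × ℤ} (hp : p.2 ≠ 0) :
    ∃ b : Bool, (blockWord p).getLast? = some (Sum.inr b) := by
  obtain ⟨n, b, hn, hx⟩ := xpow_eq_replicate hp
  exact ⟨b, by simp [blockWord, hx, List.getLast?_cons, List.getLast?_replicate, hn.ne']⟩

lemma isChain_flatten_blockWord {bs : List (Perm' × ℤ)} (hbs : ∀ p ∈ bs, p.2 ≠ 0) :
    (bs.map blockWord).flatten.IsChain ReducedAdj := by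
  induction bs with
  | nil => exact List.isChain_nil
  | cons p bs ih =>
    simp only [List.forall_mem_cons] at hbs
    rw [List.map_cons, List.flatten_cons, List.isChain_append]
    refine ⟨isChain_blockWord hbs.1, ih hbs.2, fun l hl l' hl' => ?_⟩
    obtain ⟨b, hb⟩ := getLast?_blockWord hbs.1
    obtain rfl : l = Sum.inr b := by simp_all
    cases bs with
    | nil => simp at hl'
    | cons q bs =>
      obtain rfl : l' = Sum.inl q.1 := by simp_all [blockWord]
      trivial

namespace IsNice

variable {G : Subgroup Perm'} {w : Word}

lemma isChain (h : IsNice G w) : w.IsChain ReducedAdj := by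
  rcases h with ⟨n, hn, rfl⟩ | ⟨bs, -, hbs, -, rfl⟩
  · obtain ⟨m, b, -, hx⟩ := xpow_eq_replicate (by exact_mod_cast hn.ne' : (n : ℤ) ≠ 0)
    rw [hx]
    exact List.isChain_replicate_of_rel m rfl
  · exact isChain_flatten_blockWord fun p hp => (hbs p hp).2.2

lemma dropLast_isChain (h : IsNice G w) : w.dropLast.IsChain ReducedAdj :=
  h.isChain.infix (List.dropLast_prefix w).isInfix

lemma getLast?_eq (h : IsNice G w) : w.getLast? = some (Sum.inr true) := by
  rcases h with ⟨n, hn, rfl⟩ | ⟨bs, -, -, ⟨p, hp, hp₂⟩, rfl⟩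
  · simp [xpow, List.getLast?_replicate, hn.ne']
  · rw [← List.dropLast_append_getLast? p hp]
    have : p.2.toNat ≠ 0 := by omega
    simp [blockWord, xpow, hp₂.le, List.getLast?_cons, List.getLast?_replicate, this]

lemma getLast?_ne_inl (h : IsNice G w) (g : Perm') : w.getLast? ≠ some (Sum.inl g) := by
  simp [h.getLast?_eq]

lemma dropLast_append (h : IsNice G w) : w.dropLast ++ [Sum.inr true] = w :=
  List.dropLast_append_getLast? _ h.getLast?_eq

lemma ne_nil (h : IsNice G w) : w ≠ [] := by
  rintro rfl
  simpa using h.getLast?_eq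

lemma inr_true_mem_of_suffix (h : IsNice G w) {u : Word} (hu : u ≠ []) (hsuf : u <:+ w) :
    Sum.inr true ∈ u := by
  obtain ⟨v, rfl⟩ := hsuf
  exact List.mem_of_getLast? ((List.getLast?_append_of_ne_nil v hu).symm.trans h.getLast?_eq)

lemma dropLast_getLast?_ne (h : IsNice G w) : w.dropLast.getLast? ≠ some (Sum.inr false) := by
  intro hl
  have hch := h.isChain
  rw [← h.dropLast_append, List.isChain_append] at hch
  exact Bool.false_ne_true (hch.2.2 _ hl _ rfl)

lemma letter_mem (h : IsNice G w) {g : Perm'} (hg : Sum.inl g ∈ w) : g ∈ G ∧ g ≠ 1 := by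
  rcases h with ⟨n, -, rfl⟩ | ⟨bs, -, hbs, -, rfl⟩
  · exact absurd hg (inl_not_mem_xpow g _)
  · simp only [List.mem_flatten, List.mem_map] at hg
    obtain ⟨_, ⟨p, hp, rfl⟩, hgp⟩ := hg
    rcases List.mem_cons.1 hgp with hgp | hgp
    · obtain rfl := Sum.inl_injective hgp
      exact ⟨(hbs p hp).1, (hbs p hp).2.1⟩
    · exact absurd hgp (inl_not_mem_xpow g _)

/-- A nonempty subword without `x^{±1}` is a single letter `g ∈ G \ {1}`, which has finitely many
fixed points since `G` is cofinitary. -/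
lemma fixedPoints_finite (hG : Cofinitary G) {s : Set (ℕ × ℕ)} (hs : s.Finite) (h : IsNice G w)
    {u : Word} (hu : u ≠ []) (hinf : u <:+: w) : {a | wordRel s u a a}.Finite := by
  have hran : (∃ b : Bool, Sum.inr b ∈ u) → {a | wordRel s u a a}.Finite := fun hb =>
    (relRan_wordRel_finite hs hb).subset fun a ha => ⟨a, ha⟩
  obtain ⟨l, u, rfl⟩ := List.exists_cons_of_ne_nil hu
  rcases l with g | b
  · rcases u with _ | ⟨l', u⟩
    · obtain ⟨hgG, hg⟩ := h.letter_mem (hinf.subset List.mem_cons_self)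
      refine (hG g hgG hg).subset ?_
      rintro a ⟨c, rfl, hl⟩
      exact hl
    · rcases l' with g' | b
      · exact ((List.isChain_cons_cons.1 (h.isChain.infix hinf)).1).elim
      · exact hran ⟨b, by simp⟩
  · exact hran ⟨b, by simp⟩

end IsNice

lemma getLast?_eq_of_singleton_suffix {α : Type*} {a : α} {l : List α} (h : [a] <:+ l) :
    l.getLast? = some a := by
  obtain ⟨v, rfl⟩ := h
  simp

section FreshPoint

variable {s : Set (ℕ × ℕ)} {k : ℕ} {W : Word} (hW : W.IsChain ReducedAdj) (hk : k ∉ pfield s)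
  (hk_letters : ∀ g : Perm', Sum.inl g ∈ W → g⁻¹ k ∉ pfield s) {a : ℕ}
  (ha : ∀ g : Perm', W.getLast? = some (Sum.inl g) → g a ≠ k)
include hW hk hk_letters ha

/-- In a reduced word the letter applied last is `x^{±1}`, whose values lie in `pfield s`, or a
letter `g` applied to such a value or to the starting point `a`. -/
lemma wordRel_ne_of_fresh {u : Word} (hsuf : u <:+ W) (hu : u ≠ []) {b : ℕ}
    (hab : wordRel s u a b) : b ≠ k := by
  obtain ⟨l, u, rfl⟩ := List.exists_cons_of_ne_nil hu
  obtain ⟨c, hc, hl⟩ := hab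
  intro hbk
  rcases l with g | _
  · rcases u with _ | ⟨l', u⟩
    · obtain rfl : a = c := hc
      exact ha g (getLast?_eq_of_singleton_suffix hsuf) (hl.trans hbk)
    · rcases l' with g' | _
      · exact (List.isChain_cons_cons.1 (hW.infix hsuf.isInfix)).1
      · obtain ⟨d, -, hd⟩ := hc
        have hgk : g⁻¹ k = c := by rw [← hbk, ← hl]; exact g.symm_apply_apply c
        exact hk_letters g (hsuf.subset List.mem_cons_self) (hgk ▸ (letterRel_inr_mem_pfield hd).2)
  · exact hk (hbk ▸ (letterRel_inr_mem_pfield hl).2)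

lemma wordRel_of_wordRel_insert {y : ℕ} (hak : a ≠ k)
    (hay : ∀ u : Word, u ≠ [] → u <:+ W → ¬ wordRel s u a y)
    (hW_last : W.getLast? ≠ some (Sum.inr false)) {u : Word} (hsuf : u <:+ W) {b : ℕ}
    (hab : wordRel (insert (k, y) s) u a b) : wordRel s u a b := by
  induction u generalizing b with
  | nil => exact hab
  | cons l u ih =>
    obtain ⟨c, hc, hl⟩ := hab
    have hsuf' := (List.suffix_cons l u).trans hsuf
    have hc' := ih hsuf' hc
    refine ⟨c, hc', ?_⟩
    rcases l with g | _ | _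
    · exact hl
    · refine (Set.mem_insert_iff.1 hl).resolve_left fun he => ?_
      obtain ⟨-, rfl⟩ := Prod.mk.inj he
      rcases eq_or_ne u [] with rfl | hu
      · exact hW_last (getLast?_eq_of_singleton_suffix hsuf)
      · exact hay u hu hsuf' hc'
    · refine (Set.mem_insert_iff.1 hl).resolve_left fun he => ?_
      obtain ⟨rfl, -⟩ := Prod.mk.inj he
      rcases eq_or_ne u [] with rfl | hu
      · exact hak hc'
      · exact wordRel_ne_of_fresh hW hk hk_letters ha hsuf' hu hc' rfl

end FreshPoint

/-- Conditions on `(k, y)` under which `w[s ∪ {(k, y)}]` is `w[s]` plus at most the edge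
`k ↦ w.dropLast[s](y)`. -/
structure FreshPair (s : Set (ℕ × ℕ)) (w : Word) (k y : ℕ) : Prop where
  k_not_mem : k ∉ pfield s
  inv_k_not_mem : ∀ g : Perm', Sum.inl g ∈ w → g⁻¹ k ∉ pfield s
  y_ne_k : y ≠ k
  apply_y_ne_k : ∀ g : Perm', Sum.inl g ∈ w → g y ≠ k
  y_not_mem_relRan : ∀ u : Word, u ≠ [] → u <:+ w → ∀ a, ¬ wordRel s u a y
  y_not_fixed : ∀ u : Word, u ≠ [] → u <:+ w.dropLast → ¬ wordRel s u y y
  image_not_mem_relRan : ∀ c, wordRel s w.dropLast y c → ∀ a, ¬ wordRel s w a c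

namespace FreshPair

variable {G : Subgroup Perm'} {s : Set (ℕ × ℕ)} {w : Word} {k y : ℕ}
  (hw : IsNice G w) (h : FreshPair s w k y)
include hw h

lemma dropLast_image_ne {c : ℕ} (hc : wordRel s w.dropLast y c) : c ≠ k := by
  rcases eq_or_ne w.dropLast [] with he | hne
  · rw [he] at hc
    exact (hc : y = c) ▸ h.y_ne_k
  · exact wordRel_ne_of_fresh hw.dropLast_isChain h.k_not_mem
      (fun g hg => h.inv_k_not_mem g (List.dropLast_subset w hg))
      (fun g hg => h.apply_y_ne_k g (List.dropLast_subset w (List.mem_of_getLast? hg)))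
      List.suffix_rfl hne hc

lemma wordRel_insert_iff (a b : ℕ) :
    wordRel (insert (k, y) s) w a b ↔ wordRel s w a b ∨ (a = k ∧ wordRel s w.dropLast y b) := by
  constructor
  · intro hab
    by_cases hak : a = k
    · subst hak
      rw [← hw.dropLast_append, wordRel_append] at hab
      obtain ⟨c, ⟨_, rfl, hac⟩, hcb⟩ := hab
      obtain rfl : c = y := (Set.mem_insert_iff.1 hac).elim (fun he => (Prod.mk.inj he).2)
        fun hac => absurd (Or.inl ⟨_, hac, rfl⟩) h.k_not_mem
      refine Or.inr ⟨rfl, wordRel_of_wordRel_insert hw.dropLast_isChain h.k_not_mem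
        (fun g hg => h.inv_k_not_mem g (List.dropLast_subset w hg))
        (fun g hg => h.apply_y_ne_k g (List.dropLast_subset w (List.mem_of_getLast? hg)))
        h.y_ne_k h.y_not_fixed hw.dropLast_getLast?_ne List.suffix_rfl hcb⟩
    · exact Or.inl (wordRel_of_wordRel_insert hw.isChain h.k_not_mem h.inv_k_not_mem
        (fun g hg => absurd hg (hw.getLast?_ne_inl g)) hak
        (fun u hu hsuf => h.y_not_mem_relRan u hu hsuf a) (by simp [hw.getLast?_eq])
        List.suffix_rfl hab)
  · rintro (hab | ⟨rfl, hyb⟩)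
    · exact wordRel_mono (Set.subset_insert _ _) hab
    · rw [← hw.dropLast_append, wordRel_append]
      exact ⟨y, ⟨a, rfl, Set.mem_insert _ _⟩, wordRel_mono (Set.subset_insert _ _) hyb⟩

lemma wordFix_insert : wordFix (insert (k, y) s) w = wordFix s w :=
  Set.ext fun n => (wordRel_insert_iff hw h n n).trans
    (or_iff_left fun ⟨hnk, hn⟩ => dropLast_image_ne hw h hn hnk)

lemma relClosedOrbits_insert (hs : PartInj s) :
    relClosedOrbits (wordRel (insert (k, y) s) w) = relClosedOrbits (wordRel s w) := by
  by_cases hex : ∃ c, wordRel s w.dropLast y c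
  · obtain ⟨c, hc⟩ := hex
    have hk_dom : ∀ b, ¬ wordRel s w k b := by
      intro b hb
      rw [← hw.dropLast_append, wordRel_append] at hb
      obtain ⟨d, ⟨_, rfl, hkd⟩, -⟩ := hb
      exact h.k_not_mem (letterRel_inr_mem_pfield hkd).1
    have hk_ran : ∀ a, ¬ wordRel s w a k := fun a ha =>
      wordRel_ne_of_fresh hw.isChain h.k_not_mem h.inv_k_not_mem
        (fun g hg => absurd hg (hw.getLast?_ne_inl g)) List.suffix_rfl hw.ne_nil ha rfl
    refine relClosedOrbits_add_edge (fun a b => ?_) hk_dom hk_ran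
      (h.image_not_mem_relRan c hc) (dropLast_image_ne hw h hc)
    rw [wordRel_insert_iff hw h]
    exact or_congr_right ⟨fun ⟨hak, hb⟩ => ⟨hak, wordRel_rightUnique hs _ hb hc⟩,
      fun ⟨hak, hbc⟩ => ⟨hak, hbc ▸ hc⟩⟩
  · have hrel : wordRel (insert (k, y) s) w = wordRel s w := funext₂ fun a b => propext <|
      (wordRel_insert_iff hw h a b).trans (or_iff_left fun ⟨_, hb⟩ => hex ⟨b, hb⟩)
    rw [hrel]

end FreshPair

def groupLetters (E : Set Word) : Set Perm' := {g | ∃ w ∈ E, Sum.inl g ∈ w}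

lemma groupLetters_finite {E : Set Word} (hE : E.Finite) : (groupLetters E).Finite :=
  (hE.biUnion fun w _ => w.finite_toSet.preimage Sum.inl_injective.injOn).subset
    fun _ ⟨_, hw, hg⟩ => Set.mem_biUnion hw hg

lemma groupLetters_subset {G : Subgroup Perm'} {E : Set Word} (hE : ∀ w ∈ E, IsNice G w) :
    groupLetters E ⊆ G :=
  fun _ ⟨w, hw, hg⟩ => ((hE w hw).letter_mem hg).1

def forbiddenPositions (s : Set (ℕ × ℕ)) (Γ : Set Perm') : Set ℕ :=
  ⋃ g ∈ insert 1 Γ, (⇑g⁻¹) ⁻¹' pfield s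

lemma forbiddenPositions_finite {s : Set (ℕ × ℕ)} {Γ : Set Perm'} (hs : s.Finite)
    (hΓ : Γ.Finite) : (forbiddenPositions s Γ).Finite :=
  (hΓ.insert 1).biUnion fun g _ => (pfield_finite hs).preimage (g⁻¹).injective.injOn

lemma not_mem_forbiddenPositions {s : Set (ℕ × ℕ)} {Γ : Set Perm'} {k : ℕ}
    (hk : k ∉ forbiddenPositions s Γ) {g : Perm'} (hg : g ∈ insert 1 Γ) : g⁻¹ k ∉ pfield s :=
  fun h => hk (Set.mem_biUnion hg h)

def badValues (s : Set (ℕ × ℕ)) (w : Word) : Set ℕ :=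
  (⋃ u ∈ {u : Word | u ≠ [] ∧ u <:+ w}, relRan (wordRel s u)) ∪
  (⋃ u ∈ {u : Word | u ≠ [] ∧ u <:+ w.dropLast}, {a | wordRel s u a a}) ∪
  {a | ∃ c, wordRel s w.dropLast a c ∧ c ∈ relRan (wordRel s w)}

lemma finite_setOf_isSuffix {α : Type*} (l : List α) : {u | u <:+ l}.Finite :=
  l.tails.finite_toSet.subset fun u hu => (List.mem_tails u l).2 hu

lemma badValues_finite {G : Subgroup Perm'} (hG : Cofinitary G) {s : Set (ℕ × ℕ)}
    (hs : s.Finite) (hsi : PartInj s) {w : Word} (hw : IsNice G w) : (badValues s w).Finite := by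
  refine .union (.union ?_ ?_) (wordRel_preimage_finite hsi _ (relRan_wordRel_finite hs
    ⟨true, hw.inr_true_mem_of_suffix hw.ne_nil List.suffix_rfl⟩))
  · exact ((finite_setOf_isSuffix w).subset fun u hu => hu.2).biUnion fun u hu =>
      relRan_wordRel_finite hs ⟨true, hw.inr_true_mem_of_suffix hu.1 hu.2⟩
  · exact ((finite_setOf_isSuffix w.dropLast).subset fun u hu => hu.2).biUnion fun u hu =>
      hw.fixedPoints_finite hG hs hu.1 (hu.2.isInfix.trans (List.dropLast_prefix w).isInfix)

lemma FreshPair.of_not_mem {s : Set (ℕ × ℕ)} {E : Set Word} {w : Word} {k y : ℕ} (hwE : w ∈ E)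
    (hk : k ∉ forbiddenPositions s (groupLetters E))
    (hyk : ∀ f ∈ (·⁻¹) '' insert 1 (groupLetters E), y ≠ f k) (hy : y ∉ badValues s w) :
    FreshPair s w k y := by
  have hΓ : ∀ g : Perm', Sum.inl g ∈ w → g ∈ insert 1 (groupLetters E) :=
    fun g hg => Or.inr ⟨w, hwE, hg⟩
  have hy' : ∀ g ∈ insert 1 (groupLetters E), y ≠ g⁻¹ k := fun g hg => hyk _ ⟨g, hg, rfl⟩
  exact {
    k_not_mem := by simpa using not_mem_forbiddenPositions hk (Set.mem_insert 1 _)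
    inv_k_not_mem := fun g hg => not_mem_forbiddenPositions hk (hΓ g hg)
    y_ne_k := by simpa using hy' 1 (Set.mem_insert 1 _)
    apply_y_ne_k := fun g hg hgy =>
      hy' g (hΓ g hg) (by rw [← hgy]; exact (g.symm_apply_apply y).symm)
    y_not_mem_relRan := fun u hu hsuf a hay =>
      hy (Or.inl (Or.inl (Set.mem_biUnion ⟨hu, hsuf⟩ ⟨a, hay⟩)))
    y_not_fixed := fun u hu hsuf hyy => hy (Or.inl (Or.inr (Set.mem_biUnion ⟨hu, hsuf⟩ hyy)))
    image_not_mem_relRan := fun c hc a hac => hy (Or.inr ⟨c, hc, a, hac⟩) }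

lemma getD_eq_of_prefix {α : Type*} {l l' : List α} (h : l <+: l') {j : ℕ} (hj : j < l.length)
    (d : α) : l'.getD j d = l.getD j d := by
  rw [List.getD_eq_getElem _ _ hj, List.getD_eq_getElem _ _ (hj.trans_le h.length_le)]
  exact (h.getElem hj).symm

namespace TreePos

variable {P : Set Perm'} {T : Set (List ℕ)} (hT : TreePos P T) {P₀ : Set Perm'} (hP₀ : P₀ ⊆ P)
  (hP₀fin : P₀.Finite) {t : List ℕ} (ht : t ∈ T)
include hT hP₀ hP₀fin ht

lemma exists_positions (n : ℕ) :
    ∃ t' ∈ T, t <+: t' ∧ ∃ S : Finset ℕ, S.card = n ∧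
      ∀ k ∈ S, t.length ≤ k ∧ k < t'.length ∧ ∀ f ∈ P₀, t'.getD k 0 ≠ f k := by
  induction n with
  | zero => exact ⟨t, ht, List.prefix_rfl, ∅, rfl, by simp⟩
  | succ n ih =>
    obtain ⟨t₁, ht₁, htt₁, S, hS, hSgood⟩ := ih
    obtain ⟨t₂, ht₂, ht₁₂, k, hk₁, hk₂, hk⟩ := hT.2 t₁ ht₁ P₀ hP₀ hP₀fin
    have hkS : k ∉ S := fun h => (hSgood k h).2.1.not_ge hk₁
    refine ⟨t₂, ht₂, htt₁.trans ht₁₂, insert k S, by rw [Finset.card_insert_of_notMem hkS, hS],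
      ?_⟩
    simp only [Finset.mem_insert, forall_eq_or_imp]
    refine ⟨⟨htt₁.length_le.trans hk₁, hk₂, hk⟩, fun j hj => ?_⟩
    obtain ⟨hj₁, hj₂, hj⟩ := hSgood j hj
    exact ⟨hj₁, hj₂.trans_le ht₁₂.length_le, by rwa [getD_eq_of_prefix ht₁₂ hj₂]⟩

/-- The values at distinct positions of a node are distinct since `T` is injective, so
`|B| + |K| + 1` admissible positions contain one whose position avoids `K` and value avoids `B`. -/
lemma exists_position_avoiding {K B : Set ℕ} (hK : K.Finite) (hB : B.Finite) :
    ∃ t' ∈ T, t <+: t' ∧ ∃ k, t.length ≤ k ∧ k < t'.length ∧ k ∉ K ∧ t'.getD k 0 ∉ B ∧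
      ∀ f ∈ P₀, t'.getD k 0 ≠ f k := by
  classical
  obtain ⟨t', ht', htt', S, hS, hSgood⟩ :=
    exists_positions hT hP₀ hP₀fin ht (hB.toFinset.card + hK.toFinset.card + 1)
  set v : ℕ → ℕ := fun j => t'.getD j 0
  have hv : Set.InjOn v S := fun i hi j hj hij => by
    have hi' := (hSgood i hi).2.1
    have hj' := (hSgood j hj).2.1
    simp only [v, List.getD_eq_getElem _ _ hi', List.getD_eq_getElem _ _ hj'] at hij
    exact (hT.1.2.2 t' ht').getElem_inj_iff.1 hij
  have hcard : (hB.toFinset ∪ hK.toFinset.image v).card < (S.image v).card := by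
    rw [Finset.card_image_of_injOn hv, hS]
    calc _ ≤ hB.toFinset.card + (hK.toFinset.image v).card := Finset.card_union_le _ _
      _ ≤ hB.toFinset.card + hK.toFinset.card := Nat.add_le_add_left Finset.card_image_le _
      _ < _ := Nat.lt_succ_self _
  obtain ⟨y, hyS, hybad⟩ := Finset.exists_mem_notMem_of_card_lt_card hcard
  obtain ⟨k, hk, rfl⟩ := Finset.mem_image.1 hyS
  simp only [Finset.mem_union, Finset.mem_image, Set.Finite.mem_toFinset, not_or, not_exists,
    not_and] at hybad
  obtain ⟨hkt, hkt', hkP⟩ := hSgood k hk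
  exact ⟨t', ht', htt', k, hkt, hkt', fun hkK => hybad.2 k hkK rfl, hybad.1, hkP⟩

end TreePos

lemma ZdagCond.of_relClosedOrbits_eq {G : Subgroup Perm'} {r : ℕ → Fin 2} {s s' : Set (ℕ × ℕ)}
    {E : Set Word} (hc : ZdagCond G r s E) (hs' : s'.Finite) (hinj : PartInj s')
    (horb : ∀ w ∈ E, relClosedOrbits (wordRel s' w) = relClosedOrbits (wordRel s w)) :
    ZdagCond G r s' E := by
  obtain ⟨⟨-, -, hEfin, hnice⟩, hcycl, hdag⟩ := hc
  refine ⟨⟨hs', hinj, hEfin, hnice⟩, hcycl, fun w hw v m hv hwv => ?_⟩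
  obtain ⟨hpow, hcode⟩ := hdag w hw v m hv hwv
  have hvE : v ∈ E := by
    have hm : 0 < m := Nat.pos_of_ne_zero fun h => (hnice w hw).ne_nil (by simp [hwv, h, wpow])
    simpa [wpow] using hpow 1 one_pos hm
  exact ⟨hpow, fun n hn i hi => by simpa only [odag, horb v hvE] using hcode n hn i hi⟩

/-- The generic hitting lemma for the coding forcing `Z†_G(r)`. -/
theorem statement15 (G : Subgroup Perm') (hG : Cofinitary G) (r : ℕ → Fin 2)
    (T : Set (List ℕ)) (hT : TreePos (G : Set Perm') T)
    (t : List ℕ) (ht : t ∈ T)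
    (s : Set (ℕ × ℕ)) (E : Set Word) (hc : ZdagCond G r s E) :
    ∃ s' : Set (ℕ × ℕ), ZdagCond G r s' E ∧ ZLe s' E s E ∧
      ∃ t' ∈ T, t <+: t' ∧
        ∃ k : ℕ, t.length ≤ k ∧ k < t'.length ∧ (k, t'.getD k 0) ∈ s' := by
  obtain ⟨hsfin, hsinj, hEfin, hnice⟩ := hc.1
  have hΓ := groupLetters_finite hEfin
  have hΓG : insert 1 (groupLetters E) ⊆ (G : Set Perm') :=
    Set.insert_subset G.one_mem (groupLetters_subset hnice)
  obtain ⟨t', ht', htt', k, hkt, hkt', hk, hy, hyk⟩ := hT.exists_position_avoiding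
    (Set.image_subset_iff.2 fun g hg => G.inv_mem (hΓG hg)) ((hΓ.insert 1).image _) ht
    (forbiddenPositions_finite hsfin hΓ)
    ((hsfin.image Prod.snd).union
      (hEfin.biUnion fun w hw => badValues_finite hG hsfin hsinj (hnice w hw)))
  set y := t'.getD k 0
  have hfresh : ∀ w ∈ E, FreshPair s w k y := fun w hw =>
    .of_not_mem hw hk hyk fun h => hy (Or.inr (Set.mem_biUnion hw h))
  have hk_dom : k ∉ pdom s := fun h => by
    simpa using not_mem_forbiddenPositions hk (Set.mem_insert 1 _) (Or.inl h)
  refine ⟨insert (k, y) s, hc.of_relClosedOrbits_eq (hsfin.insert _)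
      (hsinj.insert hk_dom fun h => hy (Or.inl h))
      fun w hw => (hfresh w hw).relClosedOrbits_insert (hnice w hw) hsinj,
    ⟨Set.subset_insert _ _, subset_rfl, fun w hw => (hfresh w hw).wordFix_insert (hnice w hw)⟩,
    t', ht', htt', k, hkt, hkt', Set.mem_insert _ _⟩

end
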